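/- Let K be a field and c ∈ ℤⁿ with c⁺ ≠ 0 and c⁻ ≠ 0. Let f ∈ S = K[x₁,…,xₙ] be nonzero and homogeneous with respect to the ℤⁿ/ℤc-grading, and write f = Σ_{i=0}^{s} λ_i x^{u+ic} with u, u+sc ∈ ℕⁿ, λ₀ ≠ 0 and λ_s ≠ 0 (every nonzero homogeneous polynomial has this form). If ≺ is a term order with x^{c⁺} ≺ x^{c⁻}, then in_≺(f) = x^u; if x^{c⁺} ≻ x^{c⁻}, then in_≺(f) = x^{u+sc}. Consequently, for an ideal I homogeneous with respect to the ℤⁿ/ℤc-grading, the initial ideal in_≺(I) depends only on whether x^{c⁺} ≺ x^{c⁻} or x^{c⁺} ≻ x^{c⁻}. -/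
import Mathlib


open MvPolynomial

/-- A term order on the monomial exponents of `K[x₁,…,xₙ]`: a strict total order on
`Fin n →₀ ℕ` with `0` smallest and compatible with addition. -/
def IsTermOrder (n : ℕ) (lt : (Fin n →₀ ℕ) → (Fin n →₀ ℕ) → Prop) : Prop :=
  (∀ u v : Fin n →₀ ℕ, lt u v ∨ u = v ∨ lt v u) ∧
  (∀ u v w : Fin n →₀ ℕ, lt u v → lt v w → lt u w) ∧
  (∀ u : Fin n →₀ ℕ, ¬ lt u u) ∧
  (∀ u : Fin n →₀ ℕ, u ≠ 0 → lt 0 u) ∧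
  (∀ u v w : Fin n →₀ ℕ, lt u v → lt (u + w) (v + w))

/-- `u` is the exponent of the `lt`-leading monomial `in_≺(f)` of `f`. -/
def IsLeadExp {n : ℕ} {K : Type*} [Field K] (lt : (Fin n →₀ ℕ) → (Fin n →₀ ℕ) → Prop)
    (f : MvPolynomial (Fin n) K) (u : Fin n →₀ ℕ) : Prop :=
  u ∈ f.support ∧ ∀ v ∈ f.support, v ≠ u → lt v u

/-- The initial ideal `in_≺(I)`, generated by the leading monomials of nonzero elements. -/
noncomputable def initialIdeal {n : ℕ} {K : Type*} [Field K]
    (lt : (Fin n →₀ ℕ) → (Fin n →₀ ℕ) → Prop) (I : Ideal (MvPolynomial (Fin n) K)) :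
    Ideal (MvPolynomial (Fin n) K) :=
  Ideal.span { p | ∃ f ∈ I, ∃ u, IsLeadExp lt f u ∧ p = monomial u 1 }

/-- `DistRel c u v ℓ` says that `u - v = ℓ·c` in `ℤⁿ`; then `d(x^u, x^v) = |ℓ|`. -/
def DistRel {n : ℕ} (c : Fin n → ℤ) (u v : Fin n →₀ ℕ) (ℓ : ℤ) : Prop :=
  ∀ i, (u i : ℤ) - (v i : ℤ) = ℓ * c i

/-- Two monomials have the same degree in the `ℤⁿ/ℤc`-grading iff `u - v ∈ ℤc`. -/
def SameDeg {n : ℕ} (c : Fin n → ℤ) (u v : Fin n →₀ ℕ) : Prop :=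
  ∃ ℓ : ℤ, DistRel c u v ℓ

/-- A polynomial is homogeneous for the `ℤⁿ/ℤc`-grading if all of its monomials
have the same degree. -/
def CHom {n : ℕ} {K : Type*} [Field K] (c : Fin n → ℤ) (f : MvPolynomial (Fin n) K) : Prop :=
  ∀ u ∈ f.support, ∀ v ∈ f.support, SameDeg c u v

/-- An ideal is homogeneous for the `ℤⁿ/ℤc`-grading if it is generated by homogeneous
elements. -/
def CHomIdeal {n : ℕ} {K : Type*} [Field K] (c : Fin n → ℤ)
    (I : Ideal (MvPolynomial (Fin n) K)) : Prop :=
  ∃ G : Set (MvPolynomial (Fin n) K), (∀ g ∈ G, CHom c g) ∧ I = Ideal.span G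

/-- The exponent vector `c⁺` of a vector `c ∈ ℤⁿ`. -/
noncomputable def cpos {n : ℕ} (c : Fin n → ℤ) : Fin n →₀ ℕ :=
  Finsupp.equivFunOnFinite.symm fun i => (c i).toNat

/-- The exponent vector `c⁻` of a vector `c ∈ ℤⁿ`. -/
noncomputable def cneg {n : ℕ} (c : Fin n → ℤ) : Fin n →₀ ℕ :=
  Finsupp.equivFunOnFinite.symm fun i => (-(c i)).toNat

/-- `Mon M`: the set of (exponents of) monomials lying in `M`. -/
def Mon {n : ℕ} {K : Type*} [Field K] (M : Ideal (MvPolynomial (Fin n) K)) :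
    Set (Fin n →₀ ℕ) :=
  { u | monomial u 1 ∈ M }

/-- `f` (as a map on exponent vectors) restricts to an arrow map `Mon M → Mon N`
with respect to the `ℤⁿ/ℤc`-grading and the term order `lt`:
(1) it is a degree-preserving bijection with `m ⪰ f(m)`;
(2) `d(m', f(m')) ≤ d(m, f(m))` for every multiple `m'` of `m ∈ Mon M`;
(3) `d(f⁻¹(m'), m') ≤ d(f⁻¹(m), m)` for every `m ∈ Mon N` and multiple `m'` of `m`. -/
def IsArrowMap {n : ℕ} {K : Type*} [Field K] (c : Fin n → ℤ)
    (lt : (Fin n →₀ ℕ) → (Fin n →₀ ℕ) → Prop)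
    (M N : Ideal (MvPolynomial (Fin n) K)) (f : (Fin n →₀ ℕ) → (Fin n →₀ ℕ)) : Prop :=
  Set.BijOn f (Mon M) (Mon N) ∧
  (∀ u ∈ Mon M, SameDeg c u (f u)) ∧
  (∀ u ∈ Mon M, f u = u ∨ lt (f u) u) ∧
  (∀ u ∈ Mon M, ∀ (w : Fin n →₀ ℕ) (ℓ ℓ' : ℤ),
    DistRel c u (f u) ℓ → DistRel c (u + w) (f (u + w)) ℓ' → |ℓ'| ≤ |ℓ|) ∧
  (∀ u ∈ Mon M, ∀ u' ∈ Mon M, ∀ (w : Fin n →₀ ℕ) (ℓ ℓ' : ℤ),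
    f u' = f u + w → DistRel c u (f u) ℓ → DistRel c u' (f u') ℓ' → |ℓ'| ≤ |ℓ|)

section Statement8Aux

variable {n : ℕ} {K : Type*} [Field K]

lemma cposApply (c : Fin n → ℤ) (i : Fin n) : cpos c i = (c i).toNat := rfl

lemma cnegApply (c : Fin n → ℤ) (i : Fin n) : cneg c i = (-(c i)).toNat := rfl

lemma natCast_finsupp_ext {u v : Fin n →₀ ℕ} (h : ∀ i, (u i : ℤ) = (v i : ℤ)) : u = v :=
  Finsupp.ext fun i => Nat.cast_injective (h i)

namespace IsTermOrder

variable {lt : (Fin n →₀ ℕ) → (Fin n →₀ ℕ) → Prop}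

lemma asymm (h : IsTermOrder n lt) {a b} (hab : lt a b) : ¬ lt b a :=
  fun hba => h.2.2.1 a (h.2.1 a b a hab hba)

lemma cancel (h : IsTermOrder n lt) {a b w} (hl : lt (a + w) (b + w)) : lt a b := by
  rcases h.1 a b with h' | rfl | h'
  · exact h'
  · exact absurd hl (h.2.2.1 _)
  · exact absurd hl (h.asymm (h.2.2.2.2 _ _ w h'))

lemma smul_lt (h : IsTermOrder n lt) {a b} (hab : lt a b) :
    ∀ k : ℕ, lt ((k + 1) • a) ((k + 1) • b) := by
  intro k
  induction k with
  | zero => simpa using hab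
  | succ k ih =>
      have h1 : lt ((k + 1) • a + a) ((k + 1) • b + a) := h.2.2.2.2 _ _ a ih
      have h2 : lt (a + (k + 1) • b) (b + (k + 1) • b) := h.2.2.2.2 _ _ _ hab
      have h3 : lt ((k + 1) • b + a) ((k + 1) • b + b) := by
        rwa [add_comm ((k + 1) • b) a, add_comm ((k + 1) • b) b]
      have h4 := h.2.1 _ _ _ h1 h3
      rw [succ_nsmul a (k + 1), succ_nsmul b (k + 1)]
      exact h4

end IsTermOrder

lemma lt_of_distrel_pos {lt : (Fin n →₀ ℕ) → (Fin n →₀ ℕ) → Prop}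
    (h : IsTermOrder n lt) {c : Fin n → ℤ}
    (hc : lt (cpos c) (cneg c)) {u v : Fin n →₀ ℕ} {ℓ : ℤ} (hℓ : 0 < ℓ)
    (hd : DistRel c u v ℓ) : lt u v := by
  obtain ⟨k, hk⟩ : ∃ k : ℕ, ℓ.toNat = k + 1 := ⟨ℓ.toNat - 1, by omega⟩
  have hid : u + (k + 1) • cneg c = v + (k + 1) • cpos c := by
    apply natCast_finsupp_ext
    intro i
    have h1 := hd i
    have h2 : ((k : ℤ) + 1) = ℓ := by omega
    have h3 : ((-(c i)).toNat : ℤ) + c i = (c i).toNat := by omega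
    simp only [Finsupp.add_apply, Finsupp.smul_apply, cposApply, cnegApply, smul_eq_mul]
    push_cast
    linear_combination h1 + ((k : ℤ) + 1) * h3 - (c i) * h2
  have hstep : lt (u + (k + 1) • cneg c) (v + (k + 1) • cneg c) := by
    have h5 := h.2.2.2.2 _ _ v (h.smul_lt hc k)
    rwa [add_comm _ v, add_comm _ v, ← hid] at h5
  exact h.cancel hstep

lemma cpos_neg (c : Fin n → ℤ) : cpos (fun i => -c i) = cneg c := rfl

lemma cneg_neg (c : Fin n → ℤ) : cneg (fun i => -c i) = cpos c := by
  unfold cneg cpos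
  congr 1
  funext i
  simp

lemma lt_of_distrel_neg {lt : (Fin n →₀ ℕ) → (Fin n →₀ ℕ) → Prop}
    (h : IsTermOrder n lt) {c : Fin n → ℤ}
    (hc : lt (cneg c) (cpos c)) {u v : Fin n →₀ ℕ} {ℓ : ℤ} (hℓ : ℓ < 0)
    (hd : DistRel c u v ℓ) : lt u v := by
  refine lt_of_distrel_pos (c := fun i => -c i) h ?_ (ℓ := -ℓ) (by omega) ?_
  · rw [cpos_neg, cneg_neg]; exact hc
  · intro i
    show (u i : ℤ) - v i = -ℓ * -(c i)
    rw [show -ℓ * -(c i) = ℓ * c i by ring]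
    exact hd i

lemma distrel_zero_eq {c : Fin n → ℤ} {u v : Fin n →₀ ℕ} (hd : DistRel c u v 0) : u = v :=
  natCast_finsupp_ext fun i => by have := hd i; omega

lemma sameDeg_refl {c : Fin n → ℤ} {u : Fin n →₀ ℕ} : SameDeg c u u :=
  ⟨0, fun i => by simp⟩

lemma sameDeg_symm {c : Fin n → ℤ} {u v : Fin n →₀ ℕ} (h : SameDeg c u v) : SameDeg c v u := by
  obtain ⟨ℓ, hd⟩ := h
  exact ⟨-ℓ, fun i => by linear_combination -hd i⟩

lemma sameDeg_trans {c : Fin n → ℤ} {u v w : Fin n →₀ ℕ} (h : SameDeg c u v)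
    (h' : SameDeg c v w) : SameDeg c u w := by
  obtain ⟨ℓ, hd⟩ := h; obtain ⟨m, hd'⟩ := h'
  exact ⟨ℓ + m, fun i => by linear_combination hd i + hd' i⟩

lemma order_agree {lt₁ lt₂ : (Fin n →₀ ℕ) → (Fin n →₀ ℕ) → Prop}
    (h₁ : IsTermOrder n lt₁) (h₂ : IsTermOrder n lt₂) {c : Fin n → ℤ}
    (hsign : (lt₁ (cpos c) (cneg c) ∧ lt₂ (cpos c) (cneg c)) ∨
      (lt₁ (cneg c) (cpos c) ∧ lt₂ (cneg c) (cpos c)))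
    {u v : Fin n →₀ ℕ} (hdeg : SameDeg c u v) (hlt : lt₁ u v) : lt₂ u v := by
  obtain ⟨ℓ, hd⟩ := hdeg
  have hrev : DistRel c v u (-ℓ) := fun i => by linear_combination -hd i
  rcases hsign with ⟨ha, hb⟩ | ⟨ha, hb⟩
  · rcases lt_trichotomy ℓ 0 with hx | hx | hx
    · exact absurd hlt (h₁.asymm (lt_of_distrel_pos h₁ ha (by omega) hrev))
    · subst hx; have := distrel_zero_eq hd; subst this; exact absurd hlt (h₁.2.2.1 u)
    · exact lt_of_distrel_pos h₂ hb hx hd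
  · rcases lt_trichotomy ℓ 0 with hx | hx | hx
    · exact lt_of_distrel_neg h₂ hb hx hd
    · subst hx; have := distrel_zero_eq hd; subst this; exact absurd hlt (h₁.2.2.1 u)
    · exact absurd hlt (h₁.asymm (lt_of_distrel_neg h₁ ha (by omega) hrev))

lemma leadExp_transfer {lt₁ lt₂ : (Fin n →₀ ℕ) → (Fin n →₀ ℕ) → Prop}
    (h₁ : IsTermOrder n lt₁) (h₂ : IsTermOrder n lt₂) {c : Fin n → ℤ}
    (hsign : (lt₁ (cpos c) (cneg c) ∧ lt₂ (cpos c) (cneg c)) ∨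
      (lt₁ (cneg c) (cpos c) ∧ lt₂ (cneg c) (cpos c)))
    {g : MvPolynomial (Fin n) K} {w : Fin n →₀ ℕ} (hg : CHom c g)
    (hl : IsLeadExp lt₁ g w) : IsLeadExp lt₂ g w :=
  ⟨hl.1, fun u hu hne => order_agree h₁ h₂ hsign (hg u hu w hl.1) (hl.2 u hu hne)⟩

open Classical in
noncomputable def homComp (c : Fin n → ℤ) (w : Fin n →₀ ℕ) (f : MvPolynomial (Fin n) K) :
    MvPolynomial (Fin n) K :=
  ∑ u ∈ f.support.filter (fun u => SameDeg c u w), monomial u (f.coeff u)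

open Classical in
lemma coeff_homComp (c : Fin n → ℤ) (w : Fin n →₀ ℕ) (f : MvPolynomial (Fin n) K)
    (u : Fin n →₀ ℕ) :
    coeff u (homComp c w f) = if SameDeg c u w then coeff u f else 0 := by
  rw [homComp, coeff_sum]
  simp only [coeff_monomial]
  rw [Finset.sum_ite_eq']
  by_cases hs : SameDeg c u w
  · by_cases hmem : u ∈ f.support
    · simp [hs, hmem]
    · rw [MvPolynomial.notMem_support_iff] at hmem
      simp [hs, hmem]
  · simp [hs]

lemma support_homComp (c : Fin n → ℤ) (w : Fin n →₀ ℕ) (f : MvPolynomial (Fin n) K)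
    (u : Fin n →₀ ℕ) :
    u ∈ (homComp c w f).support ↔ u ∈ f.support ∧ SameDeg c u w := by
  classical
  by_cases hs : SameDeg c u w <;>
    simp [MvPolynomial.mem_support_iff, coeff_homComp, hs]

lemma homComp_zero (c : Fin n → ℤ) (w : Fin n →₀ ℕ) :
    homComp c w (0 : MvPolynomial (Fin n) K) = 0 := by
  ext u; simp [coeff_homComp]

lemma homComp_add (c : Fin n → ℤ) (w : Fin n →₀ ℕ) (f g : MvPolynomial (Fin n) K) :
    homComp c w (f + g) = homComp c w f + homComp c w g := by
  classical
  ext u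
  simp only [coeff_homComp, MvPolynomial.coeff_add]
  split <;> simp

lemma homComp_smul (c : Fin n → ℤ) (w : Fin n →₀ ℕ) (a : K) (f : MvPolynomial (Fin n) K) :
    homComp c w (a • f) = a • homComp c w f := by
  classical
  ext u
  simp only [coeff_homComp, MvPolynomial.coeff_smul, smul_eq_mul, mul_ite, mul_zero]

open Classical in
lemma homComp_of_CHom {c : Fin n → ℤ} {g : MvPolynomial (Fin n) K} (hg : CHom c g)
    (w : Fin n →₀ ℕ) : homComp c w g = g ∨ homComp c w g = 0 := by
  by_cases hex : ∃ u ∈ g.support, SameDeg c u w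
  · left
    obtain ⟨u0, hu0, hdu0⟩ := hex
    have hfil : g.support.filter (fun u => SameDeg c u w) = g.support := by
      apply Finset.filter_true_of_mem
      intro x hx
      exact sameDeg_trans (hg x hx u0 hu0) hdu0
    rw [homComp, hfil]
    exact support_sum_monomial_coeff g
  · right
    push_neg at hex
    rw [homComp, Finset.filter_false_of_mem hex, Finset.sum_empty]

open Pointwise in
lemma chom_monomial_mul {c : Fin n → ℤ} {g : MvPolynomial (Fin n) K} (hg : CHom c g)
    (u : Fin n →₀ ℕ) : CHom c ((monomial u 1 : MvPolynomial (Fin n) K) * g) := by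
  classical
  intro a ha b hb
  have hsub : ((monomial u 1 : MvPolynomial (Fin n) K) * g).support ⊆
      (monomial u (1 : K)).support + g.support := MvPolynomial.support_mul _ _
  have ha' := hsub ha
  have hb' := hsub hb
  rw [MvPolynomial.support_monomial, if_neg (one_ne_zero)] at ha' hb'
  rw [Finset.mem_add] at ha' hb'
  obtain ⟨x, hx, a', ha'', rfl⟩ := ha'
  obtain ⟨y, hy, b', hb'', rfl⟩ := hb'
  rw [Finset.mem_singleton] at hx hy
  subst hx; subst hy
  obtain ⟨ℓ, hd⟩ := hg a' ha'' b' hb''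
  exact ⟨ℓ, fun i => by have := hd i; simp only [Finsupp.add_apply]; push_cast; linarith⟩

lemma mem_spanK {c : Fin n → ℤ} {I : Ideal (MvPolynomial (Fin n) K)} (hI : CHomIdeal c I)
    {f : MvPolynomial (Fin n) K} (hf : f ∈ I) :
    f ∈ Submodule.span K {h : MvPolynomial (Fin n) K | CHom c h ∧ h ∈ I} := by
  obtain ⟨G, hG, rfl⟩ := hI
  refine Submodule.span_induction (p := fun x _ => x ∈ Submodule.span K
    {h : MvPolynomial (Fin n) K | CHom c h ∧ h ∈ Ideal.span G}) ?_ ?_ ?_ ?_ hf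
  · intro g hg
    exact Submodule.subset_span ⟨hG g hg, Ideal.subset_span hg⟩
  · exact Submodule.zero_mem _
  · intro x y _ _ px py
    exact Submodule.add_mem _ px py
  · intro r x _ px
    refine Submodule.span_induction (p := fun x _ => r • x ∈ Submodule.span K
      {h : MvPolynomial (Fin n) K | CHom c h ∧ h ∈ Ideal.span G}) ?_ ?_ ?_ ?_ px
    · intro h hh
      have hrh : r • h = ∑ u ∈ r.support,
          (coeff u r) • ((monomial u 1 : MvPolynomial (Fin n) K) * h) := by
        rw [smul_eq_mul]
        conv_lhs => rw [r.as_sum]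
        rw [Finset.sum_mul]
        refine Finset.sum_congr rfl fun u hu => ?_
        rw [← smul_mul_assoc, MvPolynomial.smul_monomial, smul_eq_mul, mul_one]
      rw [hrh]
      refine Submodule.sum_mem _ fun u hu => Submodule.smul_mem _ _ (Submodule.subset_span ?_)
      exact ⟨chom_monomial_mul hh.1 u, Ideal.mul_mem_left _ _ hh.2⟩
    · simpa using Submodule.zero_mem _
    · intro x y _ _ px' py'
      simp only [smul_add]
      exact Submodule.add_mem _ px' py'
    · intro a x _ px'
      simp only [smul_comm r]
      exact Submodule.smul_mem _ a px'

lemma homComp_mem {c : Fin n → ℤ} {I : Ideal (MvPolynomial (Fin n) K)} (hI : CHomIdeal c I)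
    {f : MvPolynomial (Fin n) K} (hf : f ∈ I) (w : Fin n →₀ ℕ) : homComp c w f ∈ I := by
  have h0 := mem_spanK hI hf
  refine Submodule.span_induction (p := fun x _ => homComp c w x ∈ I) ?_ ?_ ?_ ?_ h0
  · intro g hg
    rcases homComp_of_CHom hg.1 w with h | h <;> rw [h]
    exacts [hg.2, I.zero_mem]
  · simp only [homComp_zero]
    exact I.zero_mem
  · intro x y _ _ px py
    simp only [homComp_add]
    exact I.add_mem px py
  · intro a x _ px
    show homComp c w (a • x) ∈ I
    rw [homComp_smul, MvPolynomial.smul_eq_C_mul]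
    exact I.mul_mem_left _ px

lemma initial_le {c : Fin n → ℤ} {lt₁ lt₂ : (Fin n →₀ ℕ) → (Fin n →₀ ℕ) → Prop}
    (h₁ : IsTermOrder n lt₁) (h₂ : IsTermOrder n lt₂)
    (hsign : (lt₁ (cpos c) (cneg c) ∧ lt₂ (cpos c) (cneg c)) ∨
      (lt₁ (cneg c) (cpos c) ∧ lt₂ (cneg c) (cpos c)))
    (I : Ideal (MvPolynomial (Fin n) K)) (hI : CHomIdeal c I) :
    initialIdeal lt₁ I ≤ initialIdeal lt₂ I := by
  rw [initialIdeal, Ideal.span_le]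
  rintro p ⟨f, hfI, w, hlead, rfl⟩
  have hgI : homComp c w f ∈ I := homComp_mem hI hfI w
  have hwmem : w ∈ (homComp c w f).support :=
    (support_homComp c w f w).mpr ⟨hlead.1, sameDeg_refl⟩
  have hchom : CHom c (homComp c w f) := fun a ha b hb =>
    sameDeg_trans ((support_homComp c w f a).mp ha).2
      (sameDeg_symm ((support_homComp c w f b).mp hb).2)
  have hlead1 : IsLeadExp lt₁ (homComp c w f) w :=
    ⟨hwmem, fun u hu hne => hlead.2 u ((support_homComp c w f u).mp hu).1 hne⟩
  have hlead2 : IsLeadExp lt₂ (homComp c w f) w := leadExp_transfer h₁ h₂ hsign hchom hlead1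
  exact Ideal.subset_span ⟨homComp c w f, hgI, w, hlead2, rfl⟩

end Statement8Aux

/-- A nonzero `ℤⁿ/ℤc`-homogeneous polynomial has the form
`f = Σ_{i=0}^{s} λ_i x^{u+ic}` with `λ₀, λ_s ≠ 0`.  If `x^{c⁺} ≺ x^{c⁻}` then
`in_≺(f) = x^u`; if `x^{c⁺} ≻ x^{c⁻}` then `in_≺(f) = x^{u+sc}`.  Consequently the
initial ideal of a homogeneous ideal depends only on whether `x^{c⁺} ≺ x^{c⁻}` or
`x^{c⁺} ≻ x^{c⁻}`. -/
theorem initial_of_cHomogeneous {n : ℕ} {K : Type*} [Field K] (c : Fin n → ℤ)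
    (hcp : cpos c ≠ 0) (hcn : cneg c ≠ 0)
    (s : ℕ) (lam : ℕ → K) (v : ℕ → (Fin n →₀ ℕ))
    (hv : ∀ i ≤ s, ∀ j : Fin n, (v i j : ℤ) = (v 0 j : ℤ) + i * c j)
    (h0 : lam 0 ≠ 0) (hs : lam s ≠ 0)
    (f : MvPolynomial (Fin n) K)
    (hf : f = ∑ i ∈ Finset.range (s + 1), monomial (v i) (lam i)) (hf0 : f ≠ 0) :
    (∀ lt, IsTermOrder n lt → lt (cpos c) (cneg c) → IsLeadExp lt f (v 0)) ∧
    (∀ lt, IsTermOrder n lt → lt (cneg c) (cpos c) → IsLeadExp lt f (v s)) ∧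
    (∀ lt₁ lt₂, IsTermOrder n lt₁ → IsTermOrder n lt₂ →
      ((lt₁ (cpos c) (cneg c) ∧ lt₂ (cpos c) (cneg c)) ∨
        (lt₁ (cneg c) (cpos c) ∧ lt₂ (cneg c) (cpos c))) →
      ∀ I : Ideal (MvPolynomial (Fin n) K), CHomIdeal c I →
        initialIdeal lt₁ I = initialIdeal lt₂ I) := by
  classical
  obtain ⟨j, hj⟩ : ∃ j, 0 < c j := by
    by_contra hx
    push_neg at hx
    apply hcp
    apply Finsupp.ext
    intro i
    have := hx i
    simp only [cposApply, Finsupp.coe_zero, Pi.zero_apply]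
    omega
  have hvinj : ∀ i ≤ s, ∀ i' ≤ s, v i = v i' → i = i' := by
    intro i hi i' hi' he
    have h1 := hv i hi j
    have h2 := hv i' hi' j
    have h3 : (v i j : ℤ) = v i' j := by rw [he]
    have h4 : (i : ℤ) * c j = i' * c j := by linarith
    have h5 : (i : ℤ) = i' := mul_right_cancel₀ (ne_of_gt hj) h4
    exact_mod_cast h5
  have hcoeff : ∀ k ≤ s, coeff (v k) f = lam k := by
    intro k hk
    rw [hf, coeff_sum]
    rw [Finset.sum_eq_single k]
    · simp [coeff_monomial]
    · intro b hb hbk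
      rw [Finset.mem_range] at hb
      have : v b ≠ v k := fun he => hbk (hvinj b (by omega) k hk he)
      simp [coeff_monomial, this]
    · intro hk'
      exact absurd (Finset.mem_range.mpr (by omega)) hk'
  have hsupp : ∀ w ∈ f.support, ∃ i ≤ s, w = v i := by
    intro w hw
    rw [hf] at hw
    have := MvPolynomial.support_sum hw
    rw [Finset.mem_biUnion] at this
    obtain ⟨i, hi, hwi⟩ := this
    rw [Finset.mem_range] at hi
    rw [MvPolynomial.support_monomial] at hwi
    refine ⟨i, by omega, ?_⟩
    by_cases hl : lam i = 0
    · rw [if_pos hl] at hwi; exact absurd hwi (Finset.notMem_empty w)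
    · rw [if_neg hl] at hwi; exact Finset.mem_singleton.mp hwi
  have hdist : ∀ i ≤ s, ∀ k ≤ s, DistRel c (v i) (v k) ((i : ℤ) - k) := by
    intro i hi k hk j'
    have h1 := hv i hi j'
    have h2 := hv k hk j'
    push_cast
    linear_combination h1 - h2
  refine ⟨?_, ?_, ?_⟩
  · intro lt hlt hc
    constructor
    · rw [MvPolynomial.mem_support_iff, hcoeff 0 (Nat.zero_le s)]
      exact h0
    · intro w hw hne
      obtain ⟨i, his, rfl⟩ := hsupp w hw
      have hi0 : i ≠ 0 := fun h => hne (by rw [h])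
      have := hdist i his 0 (Nat.zero_le s)
      refine lt_of_distrel_pos hlt hc (ℓ := (i : ℤ) - 0) ?_ this
      omega
  · intro lt hlt hc
    constructor
    · rw [MvPolynomial.mem_support_iff, hcoeff s le_rfl]
      exact hs
    · intro w hw hne
      obtain ⟨i, his, rfl⟩ := hsupp w hw
      have hi0 : i ≠ s := fun h => hne (by rw [h])
      have := hdist i his s le_rfl
      refine lt_of_distrel_neg hlt hc (ℓ := (i : ℤ) - s) ?_ this
      omega
  · intro lt₁ lt₂ h₁ h₂ hsign I hI
    have hsign' : (lt₂ (cpos c) (cneg c) ∧ lt₁ (cpos c) (cneg c)) ∨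
        (lt₂ (cneg c) (cpos c) ∧ lt₁ (cneg c) (cpos c)) := by
      rcases hsign with ⟨a, b⟩ | ⟨a, b⟩
      · exact Or.inl ⟨b, a⟩
      · exact Or.inr ⟨b, a⟩
    exact le_antisymm (initial_le h₁ h₂ hsign I hI) (initial_le h₂ h₁ hsign' I hI)
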